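/- arXiv:1512.06776 — 6 statements merged into one kernel-verified Lean document; each statement's English description precedes it below -/
import Mathlib

section
/- If S is a finite monoid and E ⊆ E(S) is a subsemilattice containing 1, then every ~R_E-class contains exactly one idempotent from E; namely, for each a ∈ S the product of all e ∈ E with ea = a is the unique element of E that is ~R_E-related to a. -/
/-!
Let `F = {e ∈ E | e a = a}` and `p = ∏ F`. Both `E` and the left stabiliser of `a` are submonoids,
so `p ∈ E` and `p a = a`; conversely every idempotent `e ∈ F` is a factor of `p`, whence `e p = p`.
So `p` and `a` have the same left identities in `E`. Two commuting idempotents `f, p` with the same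
left identities in `E` are equal: `f = p f = f p = p`.
-/

namespace Finset

theorem mul_noncommProd_eq_self_of_isIdempotentElem {ι M : Type*} [Monoid M] {s : Finset ι}
    {f : ι → M} (comm) {i : ι} (hi : i ∈ s) (hidem : IsIdempotentElem (f i)) :
    f i * s.noncommProd f comm = s.noncommProd f comm := by
  classical
  rw [← mul_noncommProd_erase s hi f comm, ← mul_assoc, hidem.eq]

end Finset

section LeftIdentities

variable {S : Type*} [Monoid S]

/-- The relation `a ~R_E b`. -/
def TildeR (E : Set S) (a b : S) : Prop :=
  ∀ e ∈ E, e * a = a ↔ e * b = b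

theorem TildeR.symm {E : Set S} {a b : S} (h : TildeR E a b) : TildeR E b a :=
  fun e he => (h e he).symm

theorem TildeR.trans {E : Set S} {a b c : S} (hab : TildeR E a b) (hbc : TildeR E b c) :
    TildeR E a c :=
  fun e he => (hab e he).trans (hbc e he)

theorem TildeR.eq_of_isIdempotentElem {E : Set S} {f p : S} (hfE : f ∈ E) (hpE : p ∈ E)
    (hf : IsIdempotentElem f) (hp : IsIdempotentElem p) (hfp : Commute f p) (h : TildeR E f p) :
    f = p := by
  have hfp' : f * p = p := (h f hfE).mp hf.eq
  have hpf : p * f = f := (h p hpE).mpr hp.eq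
  rw [← hpf, ← hfp.eq, hfp']

end LeftIdentities

/-- If `S` is a finite monoid and `E ⊆ E(S)` is a subsemilattice with
`1 ∈ E`, then every `~R_E`-class contains exactly one idempotent from `E`; namely,
for each `a ∈ S` the product of all `e ∈ E` with `e * a = a` lies in `E`, is
`~R_E`-related to `a`, and is the unique such element of `E`. -/
theorem tildeR_class_exactly_one_idempotent
    (S : Type*) [Monoid S] [Fintype S] (E : Set S)
    (hidem : ∀ e ∈ E, e * e = e)
    (hclosed : ∀ e ∈ E, ∀ f ∈ E, e * f ∈ E)
    (hcomm : ∀ e ∈ E, ∀ f ∈ E, e * f = f * e)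
    (hone : (1 : S) ∈ E) (a : S)
    (p : S)
    (hp : p = Finset.noncommProd ((Set.toFinite {e | e ∈ E ∧ e * a = a}).toFinset) id
      (fun x hx y hy _ => by
        have hx' := ((Set.Finite.mem_toFinset _).mp hx).1
        have hy' := ((Set.Finite.mem_toFinset _).mp hy).1
        simpa [Commute, SemiconjBy] using (hcomm x hx' y hy'))) :
    p ∈ E ∧ (∀ e ∈ E, (e * p = p ↔ e * a = a)) ∧
      (∀ f ∈ E, (∀ e ∈ E, (e * f = f ↔ e * a = a)) → f = p) := by
  let EM : Submonoid S := ⟨⟨E, fun {e f} he hf => hclosed e he f hf⟩, hone⟩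
  have hpM : p ∈ EM ⊓ MulAction.stabilizerSubmonoid S a :=
    hp ▸ Submonoid.noncommProd_mem _ _ _ _ fun _ he => (Set.Finite.mem_toFinset _).mp he
  obtain ⟨hpE, hpa : p * a = a⟩ := hpM
  have hpR : TildeR E p a := fun e he =>
    ⟨fun hep => by rw [← hpa, ← mul_assoc, hep], fun hea => hp ▸
      Finset.mul_noncommProd_eq_self_of_isIdempotentElem (f := id) _
        ((Set.Finite.mem_toFinset _).mpr ⟨he, hea⟩) (hidem e he)⟩
  exact ⟨hpE, hpR, fun f hf hfR => TildeR.eq_of_isIdempotentElem hf hpE (hidem f hf)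
    (hidem p hpE) (hcomm f hf p hpE) (TildeR.trans hfR hpR.symm)⟩
end

section
/- Let S be an E-Ehresmann semigroup with E principally finite and C its associated Ehresmann category. The map ψ: KC → KS defined by ψ(C(a)) = Σ_{b ≤_r a} μ(b, a)·b, where μ is the Möbius function of the poset (S, ≤_r), is the two-sided inverse of the algebra isomorphism φ(a) = Σ_{b ≤_r a} C(b). -/
/-!
On the basis `a ↦ C(a)`, the coefficient of `x` in `ψ (φ a)` is `∑_{x ≤ b ≤ a} μ(x, b)`, which is
the defining recursion of the Möbius function, so `ψ ∘ φ = id`. Moreover `ψ` is unitriangular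
for `≤_r` (its diagonal is `μ(a, a) = 1`), hence injective: its coefficient at a maximal element
of the support is the original one. A left inverse of an injective map is also a right inverse.
-/

/-- An E-Ehresmann semigroup as a (2,1,1)-algebra. -/
class EhresmannSemigroup (S : Type*) extends Semigroup S where
  plus : S → S
  estar : S → S
  plus_mul_self : ∀ x : S, plus x * x = x
  plus_prod_idem : ∀ x y : S, plus (plus x * plus y) = plus x * plus y
  plus_comm : ∀ x y : S, plus x * plus y = plus y * plus x
  plus_absorb : ∀ x y : S, plus x * plus (x * y) = plus (x * y)
  plus_mul_plus : ∀ x y : S, plus (x * y) = plus (x * plus y)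
  mul_estar_self : ∀ x : S, x * estar x = x
  estar_prod_idem : ∀ x y : S, estar (estar x * estar y) = estar x * estar y
  estar_comm : ∀ x y : S, estar x * estar y = estar y * estar x
  estar_absorb : ∀ x y : S, estar (x * y) * estar y = estar (x * y)
  estar_mul_estar : ∀ x y : S, estar (x * y) = estar (estar x * y)
  estar_plus : ∀ x : S, estar (plus x) = plus x
  plus_estar : ∀ x : S, plus (estar x) = estar x

open EhresmannSemigroup

open Finset Finsupp

namespace EhresmannSemigroup

variable {S : Type*} [EhresmannSemigroup S]

lemma plus_mul_plus_eq_left_of_eq_plus_mul {b a : S} (h : b = plus b * a) :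
    plus b * plus a = plus b := by
  have h' : plus b = plus (plus b * a) := congrArg plus h
  rw [plus_mul_plus, plus_prod_idem] at h'
  exact h'.symm

/-- The order `≤_r`. -/
abbrev rightOrder : PartialOrder S where
  le b a := b = plus b * a
  le_refl a := (plus_mul_self a).symm
  le_trans c b a hcb hba := calc
    c = plus c * b := hcb
    _ = plus c * plus b * a := by rw [mul_assoc, ← hba]
    _ = plus c * a := by rw [plus_mul_plus_eq_left_of_eq_plus_mul hcb]
  le_antisymm a b hab hba := by
    have hplus : plus a = plus b := by
      rw [← plus_mul_plus_eq_left_of_eq_plus_mul hab, plus_comm,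
        plus_mul_plus_eq_left_of_eq_plus_mul hba]
    rw [hab, hplus, plus_mul_self]

end EhresmannSemigroup

section LowerSum

variable {α K : Type*} [PartialOrder α] [LocallyFiniteOrderBot α] [CommRing K]

/-- With `w = 1` this is `φ`, with `w = μ` it is `ψ`. -/
noncomputable def lowerSum (w : α → α → K) : (α →₀ K) →ₗ[K] α →₀ K :=
  linearCombination K fun a => ∑ b ∈ Iic a, single b (w b a)

lemma lowerSum_eq_sum (w : α → α → K) (f : α →₀ K) :
    lowerSum w f = f.sum fun a k => ∑ b ∈ Iic a, single b (w b a * k) := by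
  simp only [lowerSum, linearCombination_apply, Finset.smul_sum, smul_single, smul_eq_mul,
    mul_comm]

lemma lowerSum_single_one (w : α → α → K) (a : α) :
    lowerSum w (single a 1) = ∑ b ∈ Iic a, single b (w b a) := by
  rw [lowerSum, linearCombination_single, one_smul]

lemma lowerSum_single_one_apply [DecidableLE α] (w : α → α → K) (a x : α) :
    lowerSum w (single a 1) x = if x ≤ a then w x a else 0 := by
  classical
  rw [lowerSum_single_one, finsetSum_apply]
  simp only [single_apply, Finset.sum_ite_eq', mem_Iic]

lemma lowerSum_apply [DecidableLE α] (w : α → α → K) (f : α →₀ K) (x : α) :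
    lowerSum w f x = f.sum fun a k => k * if x ≤ a then w x a else 0 := by
  rw [lowerSum, linearCombination_apply, Finsupp.sum_apply]
  simp only [Finsupp.smul_apply, smul_eq_mul, ← lowerSum_single_one, lowerSum_single_one_apply]

lemma lowerSum_apply_of_maximal {w : α → α → K} (hw : ∀ a, w a a = 1) {f : α →₀ K} {a : α}
    (ha : Maximal (· ∈ f.support) a) : lowerSum w f a = f a := by
  classical
  rw [lowerSum_apply, Finsupp.sum, Finset.sum_eq_single_of_mem a ha.prop]
  · rw [if_pos le_rfl, hw, mul_one]
  · intro b hb hba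
    rw [if_neg fun hab => hba (ha.eq_of_ge hb hab), mul_zero]

lemma lowerSum_injective {w : α → α → K} (hw : ∀ a, w a a = 1) :
    Function.Injective (lowerSum w) := by
  rw [← LinearMap.ker_eq_bot, LinearMap.ker_eq_bot']
  intro f hf
  by_contra hne
  obtain ⟨a, ha⟩ := f.support.exists_maximal (support_nonempty_iff.mpr hne)
  have hfa : f a = 0 := by rw [← lowerSum_apply_of_maximal hw ha, hf, Finsupp.zero_apply]
  exact mem_support_iff.mp ha.prop hfa

lemma lowerSum_lowerSum_one_single [DecidableLE α] {μ : α → α → K} (hμ_refl : ∀ a, μ a a = 1)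
    (hμ_sum : ∀ a b, a < b → ∑ c ∈ Iic b with a ≤ c, μ a c = 0) (a : α) :
    lowerSum μ (lowerSum 1 (single a 1)) = single a 1 := by
  ext x
  rw [lowerSum_single_one, map_sum, Finset.sum_apply']
  simp only [Pi.one_apply, lowerSum_single_one_apply]
  rw [← Finset.sum_filter]
  by_cases hxa : x = a
  · subst hxa
    rw [single_eq_same, ← hμ_refl x]
    refine Finset.sum_eq_single_of_mem x (by simp) fun b hb hbx => (hbx ?_).elim
    rw [mem_filter, mem_Iic] at hb
    exact le_antisymm hb.1 hb.2
  by_cases hle : x ≤ a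
  · rw [hμ_sum x a (lt_of_le_of_ne hle hxa), single_eq_of_ne hxa]
  · rw [filter_eq_empty_iff.2 fun b hb hxb => hle (hxb.trans (mem_Iic.1 hb)), sum_empty,
      single_eq_of_ne hxa]

lemma lowerSum_leftInverse_lowerSum_one [DecidableLE α] {μ : α → α → K}
    (hμ_refl : ∀ a, μ a a = 1) (hμ_sum : ∀ a b, a < b → ∑ c ∈ Iic b with a ≤ c, μ a c = 0) :
    Function.LeftInverse (lowerSum μ) (lowerSum 1) :=
  LinearMap.congr_fun (f := (lowerSum μ).comp (lowerSum 1)) (g := LinearMap.id) <|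
    Finsupp.basisSingleOne.ext fun a => by
      simpa using lowerSum_lowerSum_one_single hμ_refl hμ_sum a

end LowerSum

theorem ehresmann_algebra_iso_inverse_general (S : Type*) [EhresmannSemigroup S] [DecidableEq S]
    (K : Type*) [CommRing K]
    (hfin : ∀ a : S, {b : S | b = plus b * a}.Finite)
    -- the Möbius function of the poset `≤_r`:
    (μ : S → S → K)
    (hμ_refl : ∀ a : S, μ a a = 1)
    (hμ_sum : ∀ a b : S, a = plus a * b → a ≠ b →
      (((hfin b).toFinset.filter (fun c => a = plus a * c)).sum fun c => μ a c) = 0)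
    (φ ψ : MonoidAlgebra K S → MonoidAlgebra K S)
    (hφ : ∀ f : MonoidAlgebra K S,
      φ f = MonoidAlgebra.ofCoeff (f.coeff.sum fun a k => ((hfin a).toFinset).sum fun b => Finsupp.single b k))
    (hψ : ∀ f : MonoidAlgebra K S,
      ψ f = MonoidAlgebra.ofCoeff (f.coeff.sum fun a k => ((hfin a).toFinset).sum fun b => Finsupp.single b (μ b a * k))) :
    (∀ f : MonoidAlgebra K S, ψ (φ f) = f) ∧
    (∀ f : MonoidAlgebra K S, φ (ψ f) = f) := by
  let := rightOrder (S := S)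
  let : DecidableLE S := fun a b => inferInstanceAs (Decidable (a = plus a * b))
  let := LocallyFiniteOrderBot.ofIic S (fun a => (hfin a).toFinset)
    fun a b => Set.Finite.mem_toFinset (hfin a)
  have hφ_eq : ∀ f, φ f = .ofCoeff (lowerSum 1 f.coeff) := fun f => by
    rw [hφ, lowerSum_eq_sum]
    simp only [Pi.one_apply, one_mul]
    rfl
  have hψ_eq : ∀ f, ψ f = .ofCoeff (lowerSum μ f.coeff) := fun f => by
    rw [hψ, lowerSum_eq_sum]
    rfl
  have hleft := lowerSum_leftInverse_lowerSum_one hμ_refl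
    fun a b hab => hμ_sum a b hab.le hab.ne
  have hright := hleft.rightInverse_of_injective (lowerSum_injective hμ_refl)
  exact ⟨fun f => by simp only [hφ_eq, hψ_eq, hleft _],
    fun f => by simp only [hφ_eq, hψ_eq, hright _]⟩

/-- With `S` an E-Ehresmann semigroup with principally finite `E`
and `μ` the Möbius function of the locally finite poset `(S, ≤_r)`, the map
`ψ : KC → KS` defined by `ψ(C(a)) = Σ_{b ≤_r a} μ(b,a)·b` is the two-sided
inverse of the algebra isomorphism `φ(a) = Σ_{b ≤_r a} C(b)`. -/
theorem ehresmann_algebra_iso_inverse (S : Type*) [EhresmannSemigroup S] [DecidableEq S]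
    (K : Type*) [CommRing K]
    (hEfin : ∀ e ∈ Set.range (plus : S → S),
      {f ∈ Set.range (plus : S → S) | f = f * e}.Finite)
    (hfin : ∀ a : S, {b : S | b = plus b * a}.Finite)
    -- the Möbius function of the poset `≤_r`:
    (μ : S → S → K)
    (hμ_refl : ∀ a : S, μ a a = 1)
    (hμ_supp : ∀ a b : S, ¬ a = plus a * b → μ a b = 0)
    (hμ_sum : ∀ a b : S, a = plus a * b → a ≠ b →
      (((hfin b).toFinset.filter (fun c => a = plus a * c)).sum fun c => μ a c) = 0)
    (φ ψ : MonoidAlgebra K S → MonoidAlgebra K S)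
    (hφ : ∀ f : MonoidAlgebra K S,
      φ f = MonoidAlgebra.ofCoeff (f.coeff.sum fun a k => ((hfin a).toFinset).sum fun b => Finsupp.single b k))
    (hψ : ∀ f : MonoidAlgebra K S,
      ψ f = MonoidAlgebra.ofCoeff (f.coeff.sum fun a k => ((hfin a).toFinset).sum fun b => Finsupp.single b (μ b a * k))) :
    (∀ f : MonoidAlgebra K S, ψ (φ f) = f) ∧
    (∀ f : MonoidAlgebra K S, φ (ψ f) = f) :=
  ehresmann_algebra_iso_inverse_general S K hfin μ hμ_refl hμ_sum φ ψ hφ hψ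
end

section
/- If S = [Y, M_α, φ_{α,β}] is a strong semilattice of monoids with Y a finite semilattice, then the semigroup algebra KS is isomorphic to the direct product Π_{α∈Y} KM_α. -/
/-- The multiplication of a strong semilattice of monoids `S = [Y, M_α, φ_{α,β}]`:
for `a ∈ M_α`, `b ∈ M_β`, `a · b = φ_{α,α⊓β}(a) * φ_{β,α⊓β}(b)` in `M_{α⊓β}`. -/
def strongSemilatticeMul (Y : Type*) [SemilatticeInf Y] (M : Y → Type*)
    [∀ α, Monoid (M α)] (φ : ∀ α β : Y, β ≤ α → (M α →* M β)) :
    Mul ((α : Y) × M α) :=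
  ⟨fun a b => ⟨a.1 ⊓ b.1,
    φ a.1 (a.1 ⊓ b.1) inf_le_left a.2 * φ b.1 (a.1 ⊓ b.1) inf_le_right b.2⟩⟩

/-!
Send `m ∈ M_α` to the family `(φ_{α,β} m)_{β ≤ α}` (zero at every `β` not below `α`); by
transitivity of the structure maps this is multiplicative, so it extends to a ring homomorphism
`KS → Π_β KM_β`. Under `KS ≅ Π_α KM_α` this map is triangular with respect to the order of `Y`,
with identity diagonal blocks since `φ_{α,α} = id`, hence bijective because `Y` is finite.
-/

namespace AddMonoidHom

theorem bijective_of_triangular {ι : Type*} [PartialOrder ι] [Finite ι] [DecidableEq ι]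
    {V W : ι → Type*} [∀ i, AddCommGroup (V i)] [∀ i, AddCommGroup (W i)]
    (F : (∀ i, V i) →+ ∀ i, W i) (h_lower : ∀ i v j, ¬ j ≤ i → F (Pi.single i v) j = 0)
    (h_diag : ∀ i, Function.Bijective fun v => F (Pi.single i v) i) : Function.Bijective F := by
  cases nonempty_fintype ι
  refine ⟨(injective_iff_map_eq_zero F).2 fun x hx => funext fun i => ?_, fun y => ?_⟩
  · induction i using WellFoundedGT.induction with
    | _ i ih =>
      have h_sum : F x i = ∑ j, F (Pi.single j (x j)) i := by
        conv_lhs => rw [← Finset.univ_sum_single x]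
        rw [map_sum, Finset.sum_apply]
      have h_off : ∀ j ≠ i, F (Pi.single j (x j)) i = 0 := fun j hji => by
        by_cases hij : i ≤ j
        · rw [ih j (lt_of_le_of_ne hij hji.symm), Pi.zero_apply, Pi.single_zero, map_zero,
            Pi.zero_apply]
        · exact h_lower j _ i hij
      apply (h_diag i).1
      change F (Pi.single i (x i)) i = F (Pi.single i 0) i
      rw [← Finset.sum_eq_single_of_mem i (Finset.mem_univ i) fun j _ => h_off j, ← h_sum, hx]
      simp
  · have h_single : ∀ i w, Pi.single i w ∈ F.range := fun i => by
      induction i using WellFoundedLT.induction with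
      | _ i ih =>
        intro w
        obtain ⟨v, rfl⟩ := (h_diag i).2 w
        change Pi.single i (F (Pi.single i v) i) ∈ F.range
        set u := F (Pi.single i v)
        have h_below : ∀ j, ¬ j < i → (u - Pi.single i (u i)) j = 0 := fun j hji => by
          by_cases hj : j = i
          · subst hj
            simp
          · simp [u, Pi.single_eq_of_ne hj, h_lower i v j fun h => hji (lt_of_le_of_ne h hj)]
        have h_rest : u - Pi.single i (u i) ∈ F.range := by
          rw [← Finset.univ_sum_single (u - _)]
          refine sum_mem fun j _ => ?_
          by_cases hji : j < i
          · exact ih j hji _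
          · rw [h_below j hji, Pi.single_zero]
            exact zero_mem _
        have h_u : u ∈ F.range := ⟨Pi.single i v, rfl⟩
        simpa only [sub_sub_cancel] using sub_mem h_u h_rest
    rw [← mem_range, ← Finset.univ_sum_single y]
    exact sum_mem fun i _ => h_single i (y i)

end AddMonoidHom

namespace MonoidAlgebra

variable {K : Type*} [Semiring K]

theorem mapDomain_id {G : Type*} (x : MonoidAlgebra K G) : mapDomain id x = x := by
  ext
  simp [Finsupp.mapDomain_id]

variable {ι : Type*} [Fintype ι] {M : ι → Type*}

noncomputable def sigmaAddEquivPi : MonoidAlgebra K ((i : ι) × M i) ≃+ ∀ i, MonoidAlgebra K (M i) :=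
  coeffAddEquiv.trans <| Finsupp.sigmaFinsuppAddEquivPiFinsupp.trans <|
    AddEquiv.piCongrRight fun _ => coeffAddEquiv.symm

theorem sigmaAddEquivPi_symm_single [DecidableEq ι] (i : ι) (m : M i) (k : K) :
    sigmaAddEquivPi.symm (Pi.single i (single m k)) = single (⟨i, m⟩ : (i : ι) × M i) k := by
  rw [AddEquiv.symm_apply_eq]
  ext j n
  by_cases hj : j = i
  · subst hj
    simp [sigmaAddEquivPi, coeff_single, Finsupp.single_apply_left sigma_mk_injective]
  · simp [sigmaAddEquivPi, coeff_single, Ne.symm hj]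

end MonoidAlgebra

namespace StrongSemilattice

variable {Y : Type*} [SemilatticeInf Y] {M : Y → Type*} [∀ α, Monoid (M α)]
  (φ : ∀ α β : Y, β ≤ α → (M α →* M β))

def IsTransitive : Prop :=
  ∀ (α β γ : Y) (h1 : β ≤ α) (h2 : γ ≤ β), (φ β γ h2).comp (φ α β h1) = φ α γ (h2.trans h1)

section

variable (K : Type*) [CommSemiring K]

open Classical in
noncomputable def toPi (α : Y) (m : M α) (β : Y) : MonoidAlgebra K (M β) :=
  if h : β ≤ α then MonoidAlgebra.of K (M β) (φ α β h m) else 0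

variable {φ} in
theorem toPi_mul (hcomp : IsTransitive φ) {α β : Y} (a : M α) (b : M β) :
    toPi φ K (α ⊓ β) (φ α _ inf_le_left a * φ β _ inf_le_right b) =
      toPi φ K α a * toPi φ K β b := by
  funext γ
  by_cases h : γ ≤ α ⊓ β
  · have hφ : ∀ δ h1 (x : M δ), φ (α ⊓ β) γ h (φ δ (α ⊓ β) h1 x) = φ δ γ (h.trans h1) x :=
      fun δ h1 x => DFunLike.congr_fun (hcomp δ _ γ h1 h) x
    simp only [toPi, Pi.mul_apply, dif_pos h, dif_pos (h.trans inf_le_left),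
      dif_pos (h.trans inf_le_right), map_mul, hφ]
  · obtain hα | hβ := not_and_or.1 (mt (fun hαβ => le_inf hαβ.1 hαβ.2) h)
    · simp only [toPi, Pi.mul_apply, dif_neg h, dif_neg hα, zero_mul]
    · simp only [toPi, Pi.mul_apply, dif_neg h, dif_neg hβ, mul_zero]

noncomputable def toPiLinearMap :
    MonoidAlgebra K ((α : Y) × M α) →ₗ[K] ∀ β, MonoidAlgebra K (M β) :=
  Finsupp.linearCombination K (fun s => toPi φ K s.1 s.2) ∘ₗ
    (MonoidAlgebra.coeffLinearEquiv K).toLinearMap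

theorem toPiLinearMap_single (s : (α : Y) × M α) (k : K) :
    toPiLinearMap φ K (MonoidAlgebra.single s k) = k • toPi φ K s.1 s.2 :=
  Finsupp.linearCombination_single K k s

variable {φ} in
theorem toPiLinearMap_mul (hcomp : IsTransitive φ) (x y : MonoidAlgebra K ((α : Y) × M α)) :
    letI := strongSemilatticeMul Y M φ
    toPiLinearMap φ K (x * y) = toPiLinearMap φ K x * toPiLinearMap φ K y := by
  let := strongSemilatticeMul Y M φ
  induction x using MonoidAlgebra.induction_linear with
  | zero => simp only [zero_mul, map_zero]
  | add x x' hx hx' => simp only [add_mul, map_add, hx, hx']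
  | single s k =>
    induction y using MonoidAlgebra.induction_linear with
    | zero => simp only [mul_zero, map_zero]
    | add y y' hy hy' => simp only [mul_add, map_add, hy, hy']
    | single t l =>
      rw [MonoidAlgebra.single_mul_single, toPiLinearMap_single, toPiLinearMap_single,
        toPiLinearMap_single, smul_mul_smul_comm]
      exact congrArg _ (toPi_mul K hcomp s.2 t.2)

variable [Fintype Y]

open Classical in
theorem toPiLinearMap_sigmaAddEquivPi_symm_single (α : Y) (v : MonoidAlgebra K (M α)) (β : Y) :
    toPiLinearMap φ K (MonoidAlgebra.sigmaAddEquivPi.symm (Pi.single α v)) β =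
      if h : β ≤ α then MonoidAlgebra.mapDomain (φ α β h) v else 0 := by
  induction v using MonoidAlgebra.induction_linear with
  | zero => simp
  | add x y hx hy =>
    rw [Pi.single_add, map_add, map_add, Pi.add_apply, hx, hy]
    split_ifs <;> simp [MonoidAlgebra.mapDomain_add]
  | single m k =>
    rw [MonoidAlgebra.sigmaAddEquivPi_symm_single, toPiLinearMap_single, Pi.smul_apply, toPi]
    split_ifs <;> simp

end

section

variable (K : Type*) [CommRing K] [Fintype Y]

theorem bijective_toPiLinearMap (hid : ∀ α : Y, φ α α le_rfl = MonoidHom.id (M α)) :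
    Function.Bijective (toPiLinearMap φ K) := by
  classical
  have h := AddMonoidHom.bijective_of_triangular ((toPiLinearMap φ K).toAddMonoidHom.comp
    MonoidAlgebra.sigmaAddEquivPi.symm.toAddMonoidHom) ?lower ?diag
  · simpa using h.comp MonoidAlgebra.sigmaAddEquivPi.bijective
  · intro α v β hβ
    simp [toPiLinearMap_sigmaAddEquivPi_symm_single, hβ]
  · intro α
    convert Function.bijective_id with v
    simp [toPiLinearMap_sigmaAddEquivPi_symm_single, hid, MonoidAlgebra.mapDomain_id]

end

end StrongSemilattice

/-- If `S = [Y, M_α, φ_{α,β}]` is a strong semilattice of monoids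
with `Y` a finite semilattice, then the semigroup algebra `KS` is isomorphic
(as a K-algebra) to the direct product `Π_{α∈Y} K M_α`. -/
theorem strong_semilattice_of_monoids_algebra_iso
    (Y : Type*) [SemilatticeInf Y] [Fintype Y]
    (M : Y → Type*) [∀ α, Monoid (M α)]
    (φ : ∀ α β : Y, β ≤ α → (M α →* M β))
    (hid : ∀ α : Y, φ α α le_rfl = MonoidHom.id (M α))
    (hcomp : ∀ (α β γ : Y) (h1 : β ≤ α) (h2 : γ ≤ β),
      (φ β γ h2).comp (φ α β h1) = φ α γ (h2.trans h1))
    (K : Type*) [CommRing K] :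
    letI : Mul ((α : Y) × M α) := strongSemilatticeMul Y M φ
    ∃ e : MonoidAlgebra K ((α : Y) × M α) ≃+* ((α : Y) → MonoidAlgebra K (M α)),
      ∀ (k : K) (x : MonoidAlgebra K ((α : Y) × M α)), e (k • x) = k • e x := by
  let := strongSemilatticeMul Y M φ
  let F := StrongSemilattice.toPiLinearMap φ K
  exact ⟨{ Equiv.ofBijective F (StrongSemilattice.bijective_toPiLinearMap φ K hid) with
      map_mul' := StrongSemilattice.toPiLinearMap_mul K hcomp
      map_add' := map_add F },
    map_smul F⟩
end

section
/- Let S be an E-Ehresmann semigroup and C its associated Ehresmann category. A morphism C(a) is invertible in C if and only if a is Green's R-related to a⁺ and Green's L-related to a*. -/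
open EhresmannSemigroup

/-- The distinguished semilattice `E` of an `E`-Ehresmann semigroup. -/
def eE (S : Type*) [EhresmannSemigroup S] : Set S := Set.range (plus : S → S)

/-- The partial order `≤_r` : `a ≤_r b` iff `a = a⁺ b`. -/
def leR {S : Type*} [EhresmannSemigroup S] (a b : S) : Prop := a = plus a * b

/-- The partial order `≤_l` : `a ≤_l b` iff `a = b a*`. -/
def leL {S : Type*} [EhresmannSemigroup S] (a b : S) : Prop := a = b * estar a

/-- Green's `R` relation on a semigroup. -/
def rRel {S : Type*} [Semigroup S] (a b : S) : Prop :=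
  (a = b ∨ ∃ x, a * x = b) ∧ (b = a ∨ ∃ x, b * x = a)

/-- Green's `L` relation on a semigroup. -/
def lRel {S : Type*} [Semigroup S] (a b : S) : Prop :=
  (a = b ∨ ∃ x, x * a = b) ∧ (b = a ∨ ∃ x, x * b = a)

/-- Green's `D` relation on a semigroup. -/
def dRel {S : Type*} [Semigroup S] (a b : S) : Prop := ∃ c, rRel a c ∧ lRel c b

/-- The set `Reg_E(S)` of elements corresponding to invertible morphisms. -/
def regE (S : Type*) [EhresmannSemigroup S] : Set S :=
  {a | rRel a (plus a) ∧ lRel a (estar a)}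

/-- `C(a)` is an invertible morphism of the associated Ehresmann category. -/
def invertibleC {S : Type*} [EhresmannSemigroup S] (a : S) : Prop :=
  ∃ b, plus b = estar a ∧ estar b = plus a ∧ a * b = plus a ∧ b * a = estar a

/-!
If `C(b)` is inverse to `C(a)`, then `ab = a⁺` and `ba = a*` witness `a R a⁺` and `a L a*`.
Conversely, if `au = a⁺` and `va = a*`, then `b = vau` satisfies `ab = a⁺`, `ba = a*`, and
`b = a* u = v a⁺`; the absorption axioms then force `b⁺ = a*` and `b* = a⁺`, so `C(b)` is an
inverse of `C(a)`.
-/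

section Semigroup

variable {S : Type*} [Semigroup S] {a e : S}

theorem rRel.exists_mul_eq (h : rRel a e) (he : IsIdempotentElem e) : ∃ u, a * u = e := by
  rcases h.1 with rfl | h
  exacts [⟨a, he⟩, h]

theorem lRel.exists_mul_eq (h : lRel a e) (he : IsIdempotentElem e) : ∃ v, v * a = e := by
  rcases h.1 with rfl | h
  exacts [⟨a, he⟩, h]

end Semigroup

namespace EhresmannSemigroup

variable {S : Type*} [EhresmannSemigroup S] {a b c e u v : S}

theorem isIdempotentElem_plus (a : S) : IsIdempotentElem (plus a) := by
  simpa only [IsIdempotentElem, estar_plus] using mul_estar_self (plus a)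

theorem isIdempotentElem_estar (a : S) : IsIdempotentElem (estar a) := by
  simpa only [IsIdempotentElem, plus_estar] using plus_mul_self (estar a)

theorem rRel_plus_iff : rRel a (plus a) ↔ ∃ u, a * u = plus a :=
  ⟨fun h => h.exists_mul_eq (isIdempotentElem_plus a),
    fun ⟨u, hu⟩ => ⟨Or.inr ⟨u, hu⟩, Or.inr ⟨a, plus_mul_self a⟩⟩⟩

theorem lRel_estar_iff : lRel a (estar a) ↔ ∃ v, v * a = estar a :=
  ⟨fun h => h.exists_mul_eq (isIdempotentElem_estar a),
    fun ⟨v, hv⟩ => ⟨Or.inr ⟨v, hv⟩, Or.inr ⟨a, mul_estar_self a⟩⟩⟩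

theorem plus_eq_of_mul_eq (he : plus e = e) (h₁ : e * b = b) (h₂ : b * c = e) :
    plus b = e := by
  have hle : e * plus b = plus b := by
    simpa only [he, h₁] using plus_absorb e b
  have hge : plus b * e = e := by
    simpa only [h₂, he] using plus_absorb b c
  rw [← hle, ← he, ← plus_comm, he, hge]

theorem estar_eq_of_mul_eq (he : estar e = e) (h₁ : b * e = b) (h₂ : c * b = e) :
    estar b = e := by
  have hle : estar b * e = estar b := by
    simpa only [he, h₁] using estar_absorb b e
  have hge : e * estar b = e := by
    simpa only [h₂, he] using estar_absorb c b
  rw [← hle, ← he, estar_comm, he, hge]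

theorem invertibleC_of_mul_eq (hu : a * u = plus a) (hv : v * a = estar a) :
    invertibleC a := by
  have hb₁ : v * a * u = estar a * u := by rw [hv]
  have hb₂ : v * a * u = v * plus a := by rw [mul_assoc, hu]
  have hab : a * (v * a * u) = plus a := by
    rw [hb₁, ← mul_assoc, mul_estar_self, hu]
  have hba : v * a * u * a = estar a := by
    rw [hb₂, mul_assoc, plus_mul_self, hv]
  refine ⟨v * a * u, plus_eq_of_mul_eq (plus_estar a) ?_ hba,
    estar_eq_of_mul_eq (estar_plus a) ?_ hab, hab, hba⟩
  · rw [hb₁, ← mul_assoc, isIdempotentElem_estar a]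
  · rw [hb₂, mul_assoc, isIdempotentElem_plus a]

end EhresmannSemigroup

/-- In an E-Ehresmann semigroup `S` with associated Ehresmann
category `C`, the morphism `C(a)` is invertible in `C` iff `a` is Green's
`R`-related to `a⁺` and Green's `L`-related to `a*`. -/
theorem morphism_invertible_iff (S : Type*) [EhresmannSemigroup S] (a : S) :
    invertibleC a ↔ rRel a (EhresmannSemigroup.plus a) ∧ lRel a (EhresmannSemigroup.estar a) := by
  rw [rRel_plus_iff, lRel_estar_iff]
  constructor
  · rintro ⟨b, -, -, hab, hba⟩
    exact ⟨⟨b, hab⟩, ⟨b, hba⟩⟩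
  · rintro ⟨⟨u, hu⟩, ⟨v, hv⟩⟩
    exact invertibleC_of_mul_eq hu hv
end

section
/- Let S be an E-Ehresmann semigroup and C its associated category. Two objects C(e), C(f) (e, f ∈ E) are isomorphic in C if and only if e and f are Green's D-related in S. -/
open EhresmannSemigroup

open EhresmannSemigroup
/-! If `a⁺ = e`, `a* = f` and `a` is invertible with inverse `b`, then `e = a b` and
`a = e a` give `e R a`, while `f = b a` and `a = a f` give `a L f`. Conversely, if
`e R c L f` then `c⁺ = e` and `c* = f`, so `c x = c⁺` and `y c = c*` for some `x, y`;
the element `c* x = y c x` is then a two-sided inverse of `c` whose projections are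
forced by the absorption laws. -/

namespace EhresmannSemigroup

variable {S : Type*} [EhresmannSemigroup S]

theorem plus_mul_plus_self (x : S) : plus x * plus x = plus x := by
  simpa only [mul_estar_self] using plus_absorb x (estar x)

theorem estar_mul_estar_self (x : S) : estar x * estar x = estar x := by
  simpa only [plus_mul_self] using estar_absorb (plus x) x

theorem plus_plus (x : S) : plus (plus x) = plus x := by
  simpa only [plus_mul_plus_self] using plus_prod_idem x x

theorem plus_eq_of_mul_plus_eq {x y : S} (hxy : plus x * plus y = plus y)
    (hyx : plus y * plus x = plus x) : plus x = plus y := by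
  rw [← hyx, plus_comm, hxy]

theorem estar_eq_of_estar_mul_eq {x y : S} (hxy : estar x * estar y = estar x)
    (hyx : estar y * estar x = estar y) : estar x = estar y := by
  rw [← hxy, estar_comm, hyx]

theorem plus_of_mem_eE {e : S} (he : e ∈ eE S) : plus e = e := by
  obtain ⟨w, rfl⟩ := he
  exact plus_plus w

theorem estar_of_mem_eE {e : S} (he : e ∈ eE S) : estar e = e := by
  obtain ⟨w, rfl⟩ := he
  exact estar_plus w

end EhresmannSemigroup

section

variable {S : Type*} [EhresmannSemigroup S]

theorem rRel_iff_exists_mul {a b : S} :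
    rRel a b ↔ (∃ x, a * x = b) ∧ ∃ x, b * x = a := by
  have h (a b : S) : (a = b ∨ ∃ x, a * x = b) ↔ ∃ x, a * x = b :=
    ⟨by rintro (rfl | h); exacts [⟨estar a, mul_estar_self a⟩, h], Or.inr⟩
  rw [rRel, h, h]

theorem lRel_iff_exists_mul {a b : S} :
    lRel a b ↔ (∃ x, x * a = b) ∧ ∃ x, x * b = a := by
  have h (a b : S) : (a = b ∨ ∃ x, x * a = b) ↔ ∃ x, x * a = b :=
    ⟨by rintro (rfl | h); exacts [⟨plus a, plus_mul_self a⟩, h], Or.inr⟩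
  rw [lRel, h, h]

theorem rRel.plus_eq {a b : S} (h : rRel a b) : plus a = plus b := by
  obtain ⟨⟨x, rfl⟩, y, hy⟩ := rRel_iff_exists_mul.1 h
  refine plus_eq_of_mul_plus_eq (plus_absorb a x) ?_
  simpa only [hy] using plus_absorb (a * x) y

theorem lRel.estar_eq {a b : S} (h : lRel a b) : estar a = estar b := by
  obtain ⟨⟨x, rfl⟩, y, hy⟩ := lRel_iff_exists_mul.1 h
  refine estar_eq_of_estar_mul_eq ?_ (estar_absorb x a)
  simpa only [hy] using estar_absorb y (x * a)

theorem invertibleC_of_mul_eq {c b : S} (hcb : c * b = plus c) (hbc : b * c = estar c)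
    (hb : estar c * b = b) : invertibleC c := by
  have hbp : b * plus c = b := by rw [← hcb, ← mul_assoc, hbc, hb]
  refine ⟨b, ?_, ?_, hcb, hbc⟩
  · rw [← plus_estar c]
    refine plus_eq_of_mul_plus_eq ?_ ?_
    · simpa only [hbc] using plus_absorb b c
    · simpa only [hb, plus_estar] using plus_absorb (estar c) b
  · rw [← estar_plus c]
    refine estar_eq_of_estar_mul_eq ?_ ?_
    · simpa only [hbp, estar_plus] using estar_absorb b (plus c)
    · simpa only [hcb] using estar_absorb c b

theorem invertibleC_of_mul_eq_plus_of_mul_eq_estar {c x y : S} (hx : c * x = plus c)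
    (hy : y * c = estar c) : invertibleC c := by
  have hb : estar c * x = y * c * x := by rw [hy]
  refine invertibleC_of_mul_eq (b := estar c * x) ?_ ?_ ?_
  · rw [← mul_assoc, mul_estar_self, hx]
  · rw [hb, mul_assoc, mul_assoc, ← mul_assoc c, hx, plus_mul_self, hy]
  · rw [← mul_assoc, estar_mul_estar_self]

theorem invertibleC.dRel_plus_estar {a : S} (ha : invertibleC a) :
    dRel (plus a) (estar a) := by
  obtain ⟨b, -, -, hab, hba⟩ := ha
  exact ⟨a, rRel_iff_exists_mul.2 ⟨⟨a, plus_mul_self a⟩, b, hab⟩,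
    lRel_iff_exists_mul.2 ⟨⟨b, hba⟩, a, mul_estar_self a⟩⟩

theorem exists_invertibleC_of_dRel {e f : S} (he : e ∈ eE S) (hf : f ∈ eE S)
    (hef : dRel e f) : ∃ a : S, plus a = e ∧ estar a = f ∧ invertibleC a := by
  obtain ⟨c, hR, hL⟩ := hef
  have hpc : plus c = e := by rw [← hR.plus_eq, plus_of_mem_eE he]
  have hsc : estar c = f := by rw [hL.estar_eq, estar_of_mem_eE hf]
  obtain ⟨x, hx⟩ := (rRel_iff_exists_mul.1 hR).2
  obtain ⟨y, hy⟩ := (lRel_iff_exists_mul.1 hL).1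
  exact ⟨c, hpc, hsc, invertibleC_of_mul_eq_plus_of_mul_eq_estar (hx.trans hpc.symm)
    (hy.trans hsc.symm)⟩

end

/-- Two objects `C(e)`, `C(f)` (`e, f ∈ E`) of the associated
Ehresmann category are isomorphic iff `e` and `f` are Green's `D`-related in `S`.
(An isomorphism from `C(e)` to `C(f)` is an invertible morphism `C(a)` with
`a⁺ = e` and `a* = f`.) -/
theorem objects_isomorphic_iff_dRel (S : Type*) [EhresmannSemigroup S]
    (e f : S) (he : e ∈ eE S) (hf : f ∈ eE S) :
    (∃ a : S, plus a = e ∧ estar a = f ∧ invertibleC a) ↔ dRel e f := by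
  refine ⟨?_, exists_invertibleC_of_dRel he hf⟩
  rintro ⟨a, rfl, rfl, ha⟩
  exact ha.dRel_plus_estar
end

section
/- Let S be an E-Ehresmann semigroup whose associated category C is an EI-category (every endomorphism is an isomorphism). Then E is a maximal semilattice in S: no idempotent f ∈ E(S)\E commutes with all elements of E while E ∪ {f} remains a semilattice. -/
open EhresmannSemigroup

/-! An idempotent `f` commuting with `E` commutes in particular with `f⁺` and `f*`, which forces
`f⁺ = f*`. The EI hypothesis then puts `f` in the `R`-class of `f⁺`, whence `f f⁺ = f⁺` as `f` is
idempotent; since always `f⁺ f = f`, commutation gives `f = f⁺ ∈ E`. -/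

theorem mul_eq_of_rRel_of_isIdempotentElem {S : Type*} [Semigroup S] {a b : S}
    (ha : IsIdempotentElem a) (hab : rRel a b) : a * b = b := by
  rcases hab.1 with rfl | ⟨x, rfl⟩
  · exact ha
  · rw [← mul_assoc, ha.eq]

theorem plus_eq_estar_of_commute {S : Type*} [EhresmannSemigroup S] (a : S)
    (h₁ : Commute (plus a) a) (h₂ : Commute (estar a) a) : plus a = estar a := by
  have ha : a * plus a = a := by rw [← h₁.eq, plus_mul_self]
  have h_plus : estar a * plus a = plus a := by
    simpa only [plus_estar, h₂.eq, mul_estar_self] using plus_absorb (estar a) a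
  have h_estar : estar a * plus a = estar a := by
    simpa only [ha, estar_plus] using estar_absorb a (plus a)
  rw [← h_plus, h_estar]

/-- If the Ehresmann category `C` associated to an E-Ehresmann
semigroup `S` is an EI-category (every endomorphism is an isomorphism, i.e.
every `a` with `a⁺ = a*` lies in `Reg_E(S)`), then `E` is a maximal semilattice
in `S`: no idempotent `f ∈ E(S) \ E` commutes with every element of `E`. -/
theorem EI_implies_maximal_semilattice (S : Type*) [EhresmannSemigroup S]
    (hEI : ∀ a : S, plus a = estar a → a ∈ regE S) :
    ¬ ∃ f : S, f * f = f ∧ f ∉ eE S ∧ ∀ e ∈ eE S, e * f = f * e := by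
  rintro ⟨f, hff, hfE, hcomm⟩
  have hplus : Commute (plus f) f := hcomm _ ⟨f, rfl⟩
  have hf : plus f = estar f := plus_eq_estar_of_commute f hplus (hcomm _ ⟨estar f, plus_estar f⟩)
  have hfR : f * plus f = plus f := mul_eq_of_rRel_of_isIdempotentElem hff (hEI f hf).1
  refine hfE ⟨f, ?_⟩
  calc plus f = f * plus f := hfR.symm
    _ = plus f * f := hplus.eq.symm
    _ = f := plus_mul_self f
end
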